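/- For every β ∈ ℤ and all D₁, D₂ ∈ 𝔡, the following identity among cocycles holds: c_Lie(D₁^{(β)}, D₂^{(β)}) = β·c_Lie(D₁^{(1)}, D₂^{(1)}) + (1−β)·c_Lie(D₁^{(0)}, D₂^{(0)}) + 6nβ(β−1)·vir₁(D₁, D₂), where for D = (A, h) ∈ 𝔡 the twist D^{(β)} is the endomorphism v ↦ A·v + h • v′ + β·h′ • v of V, and vir₁((A,h),(B,k)) = (1/12)·Res(h‴·k − k‴·h). (This is the identity c_{n,β} = β·c_{n,1} + (1−β)·c_{n,0} + 6nβ(β−1)·vir₁ among the cocycles of the central extensions of the Lie algebra of first-order scalar differential operators.) -/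

import Mathlib

noncomputable section

abbrev K : Type := LaurentSeries ℂ

abbrev V (n : ℕ) : Type := Fin n → K

/-- The formal derivative of a Laurent series. -/
def fd (f : K) : K :=
  ⟨fun k => ((k + 1 : ℤ) : ℂ) * f.coeff (k + 1), by
    apply Set.IsPWO.mono (f.isPWO_support.image_of_monotone
      (f := fun x => x - 1) (fun _ _ h => sub_le_sub_right h 1))
    intro k hk
    have : f.coeff (k + 1) ≠ 0 := by
      intro h
      simp [Function.mem_support, h] at hk
    exact ⟨k + 1, this, by ring⟩⟩

/-- Truncation of a Laurent series to its coefficients in negative degrees: the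
projection onto `K₋` along `K₊`. -/
def tneg (f : K) : K :=
  ⟨fun k => if k < 0 then f.coeff k else 0, by
    refine f.isPWO_support.mono (fun k hk => ?_)
    simp only [Function.mem_support] at hk ⊢
    by_cases h : k < 0
    · simpa [h] using hk
    · simp [h] at hk⟩

/-- Truncation of a Laurent series to its coefficients in non-negative degrees: the
projection onto `K₊` along `K₋`. -/
def tpos (f : K) : K :=
  ⟨fun k => if 0 ≤ k then f.coeff k else 0, by
    refine f.isPWO_support.mono (fun k hk => ?_)
    simp only [Function.mem_support] at hk ⊢
    by_cases h : (0:ℤ) ≤ k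
    · simpa [h] using hk
    · simp [h] at hk⟩

/-- Componentwise projection of `V` onto `V₋` along `V₊`. -/
def projM {n : ℕ} (v : V n) : V n := fun i => tneg (v i)

/-- Componentwise projection of `V` onto `V₊` along `V₋`. -/
def projP {n : ℕ} (v : V n) : V n := fun i => tpos (v i)

/-- The basis vector `z^m · e_i` of `V`. -/
def bas (n : ℕ) (m : ℤ) (i : Fin n) : V n :=
  fun j => if j = i then HahnSeries.single m 1 else 0

/-- `T₁^{+−} ∘ T₂^{−+} − T₂^{+−} ∘ T₁^{−+}` as a map `V₋ → V₋` (evaluated through the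
projections onto `V₋` and `V₊`). -/
def commPM {n : ℕ} (T₁ T₂ : V n → V n) (v : V n) : V n :=
  projM (T₁ (projP (T₂ (projM v)))) - projM (T₂ (projP (T₁ (projM v))))

/-- The trace cocycle `c_Lie(T₁, T₂) = Tr(T₁^{+−} T₂^{−+} − T₂^{+−} T₁^{−+})`, computed
as the (finitely supported) sum of the diagonal coefficients in the basis
`{z^m e_i : m < 0, i}` of `V₋`. -/
def cLie (n : ℕ) (T₁ T₂ : V n → V n) : ℂ :=
  ∑ᶠ (m : ℤ) (_ : m < 0) (i : Fin n), ((commPM T₁ T₂ (bas n m i)) i).coeff m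


open LaurentPolynomial

/-- The ring `R = ℂ[z, z⁻¹]` of Laurent polynomials. -/
abbrev Rl : Type := LaurentPolynomial ℂ

/-- The inclusion `R = ℂ[z, z⁻¹] ⊆ K`. -/
def toK (f : Rl) : K :=
  ⟨fun k => f.coeff k, by
    refine (f.coeff.support.finite_toSet.isPWO).mono (fun k hk => ?_)
    simpa [Finsupp.mem_support_iff] using hk⟩

/-- The residue of a Laurent series: the coefficient of `z⁻¹`. -/
def Res (f : K) : ℂ := f.coeff (-1)

/-- The `β`-twisted operator `D^{(β)} : v ↦ A·v + h • v′ + β·h′ • v` attached to a pair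
`D = (A, h) ∈ 𝔡` (`A` a matrix of Laurent polynomials, `h` a Laurent polynomial). -/
def Dop (n : ℕ) (β : ℤ) (D : Matrix (Fin n) (Fin n) Rl × Rl) : V n → V n :=
  fun v i => (∑ j, toK (D.1 i j) * v j) + toK D.2 * fd (v i) + β • (fd (toK D.2) * v i)

/-- The Virasoro cocycle `vir₁((A,h),(B,k)) = (1/12)·Res(h‴·k − k‴·h)`. -/
def vir1 {n : ℕ} (D₁ D₂ : Matrix (Fin n) (Fin n) Rl × Rl) : ℂ :=
  (1 / 12 : ℂ) * Res (fd (fd (fd (toK D₁.2))) * toK D₂.2 - fd (fd (fd (toK D₂.2))) * toK D₁.2)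


/-!
`D^{(β)} = D^{(0)} + β·M`, where `M` is multiplication by `h′`. Every operator involved raises
degrees by a bounded amount, so `c_Lie` is a finite sum over a fixed window of degrees and hence
bilinear; thus `q(β) = c_Lie(D₁^{(β)}, D₂^{(β)})` is quadratic in `β`, and any quadratic satisfies
`q(β) = β·q(1) + (1 - β)·q(0) + β(β - 1)·[β²-coefficient]`. Here that coefficient is
`c_Lie(M₁, M₂)`. For multiplication operators by `g` and `h` the trace counts, for each `a`, the
`(-a)⁺` degrees `m` with `a ≤ m < 0`, giving `c_Lie(g·, h·) = n·Res(g·h′)`; integrating by parts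
twice turns `vir₁` into `(1/6)·Res(h₁′·h₂″)`, so `c_Lie(M₁, M₂) = 6n·vir₁`.
-/

section LaurentSeries

open HahnSeries

instance : SMulCommClass ℂ K K :=
  ⟨fun c g x => by
    simp only [smul_eq_mul]
    rw [← single_zero_mul_eq_smul, ← single_zero_mul_eq_smul, mul_left_comm]⟩

theorem fd_coeff (f : K) (k : ℤ) : (fd f).coeff k = ((k + 1 : ℤ) : ℂ) * f.coeff (k + 1) := rfl

theorem fd_add (x y : K) : fd (x + y) = fd x + fd y := by
  ext k
  simp only [fd_coeff, coeff_add, mul_add]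

theorem fd_smul (c : ℂ) (x : K) : fd (c • x) = c • fd x := by
  ext k
  simp only [fd_coeff, coeff_smul, smul_eq_mul, mul_left_comm]

theorem mem_support_of_mem_support_fd {f : K} {k : ℤ} (hk : k ∈ (fd f).support) :
    k + 1 ∈ f.support :=
  right_ne_zero_of_mul hk

theorem finite_support_fd {f : K} (hf : f.support.Finite) : (fd f).support.Finite :=
  (hf.preimage (add_left_injective 1).injOn).subset fun _ hk => mem_support_of_mem_support_fd hk

theorem finite_support_toK (p : Rl) : (toK p).support.Finite :=
  p.coeff.support.finite_toSet.subset fun _ hk => Finsupp.mem_support_iff.mpr hk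

theorem coeff_tneg (f : K) (k : ℤ) : (tneg f).coeff k = if k < 0 then f.coeff k else 0 := rfl

theorem coeff_tpos (f : K) (k : ℤ) : (tpos f).coeff k = if 0 ≤ k then f.coeff k else 0 := rfl

theorem coeff_mul_eq_finsum (u v : K) (c : ℤ) :
    (u * v).coeff c = ∑ᶠ a, u.coeff a * v.coeff (c - a) := by
  classical
  set A := Finset.antidiagonal u.isPWO_support v.isPWO_support c
  have hsupp : (Function.support fun a => u.coeff a * v.coeff (c - a)) ⊆ A.image Prod.fst := by
    intro a ha
    obtain ⟨hu, hv⟩ := mul_ne_zero_iff.mp ha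
    exact Finset.mem_image.mpr ⟨(a, c - a), Finset.mem_antidiagonal.mpr ⟨hu, hv, by omega⟩, rfl⟩
  rw [coeff_mul, finsum_eq_sum_of_support_subset _ hsupp, Finset.sum_image]
  · refine Finset.sum_congr rfl fun ij hij => ?_
    obtain ⟨-, -, rfl⟩ := Finset.mem_antidiagonal.mp hij
    simp
  · intro x hx y hy hxy
    obtain ⟨-, -, hx⟩ := Finset.mem_antidiagonal.mp hx
    obtain ⟨-, -, hy⟩ := Finset.mem_antidiagonal.mp hy
    exact Prod.ext hxy (by omega)

theorem coeff_mul_eq_sum_of_support_subset {u : K} {s : Finset ℤ} (hu : u.support ⊆ s)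
    (v : K) (c : ℤ) : (u * v).coeff c = ∑ a ∈ s, u.coeff a * v.coeff (c - a) := by
  rw [coeff_mul_eq_finsum]
  exact finsum_eq_sum_of_support_subset _ fun a ha => hu (left_ne_zero_of_mul ha)

theorem Res_fd_mul (u v : K) : Res (fd u * v) = -Res (u * fd v) := by
  simp only [Res, coeff_mul_eq_finsum, fd_coeff]
  rw [← finsum_comp_equiv (Equiv.subRight 1), ← finsum_neg_distrib]
  refine finsum_congr fun a => ?_
  simp only [Equiv.subRight_apply, sub_add_cancel, show -1 - (a - 1) = -a by ring,
    show -1 - a + 1 = -a by ring]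
  push_cast
  ring

theorem Res_mul_fd_eq_sum {g : K} {s : Finset ℤ} (hg : g.support ⊆ s) (h : K) :
    Res (g * fd h) = ∑ a ∈ s, -a * (g.coeff a * h.coeff (-a)) := by
  rw [Res, coeff_mul_eq_sum_of_support_subset hg]
  refine Finset.sum_congr rfl fun a _ => ?_
  rw [fd_coeff, show -1 - a + 1 = -a by ring]
  push_cast
  ring

theorem vir1_eq_Res {n : ℕ} (D₁ D₂ : Matrix (Fin n) (Fin n) Rl × Rl) :
    vir1 D₁ D₂ = (1 / 6 : ℂ) * Res (fd (toK D₁.2) * fd (fd (toK D₂.2))) := by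
  set h := toK D₁.2
  set k := toK D₂.2
  have h₁ : Res (fd (fd (fd h)) * k) = Res (fd h * fd (fd k)) := by
    rw [Res_fd_mul, Res_fd_mul, neg_neg]
  have h₂ : Res (fd (fd (fd k)) * h) = -Res (fd h * fd (fd k)) := by
    rw [Res_fd_mul, mul_comm]
  rw [vir1, Res, coeff_sub, ← Res, ← Res, h₁, h₂]
  ring

theorem coeff_mul_tpos_mul_single {g : K} {s : Finset ℤ} (hg : g.support ⊆ s) (h : K) (m : ℤ) :
    (g * tpos (h * single m 1)).coeff m =
      ∑ a ∈ s, if a ≤ m then g.coeff a * h.coeff (-a) else 0 := by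
  rw [coeff_mul_eq_sum_of_support_subset hg]
  refine Finset.sum_congr rfl fun a _ => ?_
  rw [coeff_tpos, coeff_mul_single, mul_one, sub_sub_cancel_left]
  split_ifs <;> first | omega | rfl | simp

theorem support_mul_subset_Iic {u w : K} {N b : ℤ} (hu : u.support ⊆ Set.Iic N)
    (hw : w.support ⊆ Set.Iic b) : (u * w).support ⊆ Set.Iic (N + b) :=
  support_mul_subset.trans ((Set.add_subset_add hu hw).trans (Set.Iic_add_Iic_subset N b))

theorem support_fd_subset_Iic {f : K} {b : ℤ} (hf : f.support ⊆ Set.Iic b) :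
    (fd f).support ⊆ Set.Iic b := fun k hk => by
  have := hf (mem_support_of_mem_support_fd hk)
  simp only [Set.mem_Iic] at this ⊢
  omega

theorem support_sum_subset_Iic {ι : Type*} (s : Finset ι) {f : ι → K} {b : ℤ}
    (hf : ∀ i ∈ s, (f i).support ⊆ Set.Iic b) : (∑ i ∈ s, f i).support ⊆ Set.Iic b :=
  Finset.sum_induction _ (fun x : K => x.support ⊆ Set.Iic b)
    (fun _ _ h₁ h₂ => (support_add_subset _ _).trans (Set.union_subset h₁ h₂)) (by simp) hf

end LaurentSeries

theorem Set.Finite.exists_subset_Ioo_neg {s : Set ℤ} (hs : s.Finite) :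
    ∃ N : ℤ, s ⊆ Set.Ioo (-N) N := by
  obtain ⟨A, hA⟩ := hs.bddBelow
  obtain ⟨B, hB⟩ := hs.bddAbove
  refine ⟨|A| + |B| + 1, fun k hk => ⟨?_, ?_⟩⟩
  · linarith [hA hk, neg_abs_le A, abs_nonneg B]
  · linarith [hB hk, le_abs_self B, abs_nonneg A]

theorem sum_Ioo_comp_neg {R : Type*} [AddCommMonoid R] (f : ℤ → R) (N : ℤ) :
    ∑ a ∈ Finset.Ioo (-N) N, f (-a) = ∑ a ∈ Finset.Ioo (-N) N, f a :=
  Finset.sum_nbij' Neg.neg Neg.neg (by intro a; simp; omega) (by intro a; simp; omega)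
    (by simp) (by simp) (by simp)

theorem sum_Ico_ite_le {R : Type*} [AddCommMonoid R] {a N : ℤ} (ha : -N ≤ a) (x : R) :
    ∑ m ∈ Finset.Ico (-N) 0, (if a ≤ m then x else 0) = (-a).toNat • x := by
  rw [← Finset.sum_filter, Finset.Ico_filter_le, max_eq_right ha, Finset.sum_const,
    Int.card_Ico, zero_sub]

theorem sum_Ico_sum_Ioo_ite_le {R : Type*} [CommRing R] (G : ℤ → R) (N : ℤ) :
    ∑ m ∈ Finset.Ico (-N) 0, ∑ a ∈ Finset.Ioo (-N) N, (if a ≤ m then G a - G (-a) else 0) =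
      ∑ a ∈ Finset.Ioo (-N) N, -a * G a := by
  rw [Finset.sum_comm]
  calc ∑ a ∈ Finset.Ioo (-N) N, ∑ m ∈ Finset.Ico (-N) 0, (if a ≤ m then G a - G (-a) else 0)
      = ∑ a ∈ Finset.Ioo (-N) N, ((-a).toNat • G a - (-a).toNat • G (-a)) :=
        Finset.sum_congr rfl fun a ha => by
          rw [sum_Ico_ite_le (Finset.mem_Ioo.mp ha).1.le, smul_sub]
    _ = ∑ a ∈ Finset.Ioo (-N) N, ((-a).toNat • G a - a.toNat • G a) := by
        rw [Finset.sum_sub_distrib, Finset.sum_sub_distrib,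
          ← sum_Ioo_comp_neg (fun a => a.toNat • G a)]
    _ = ∑ a ∈ Finset.Ioo (-N) N, -a * G a := Finset.sum_congr rfl fun a _ => by
        rw [nsmul_eq_mul, nsmul_eq_mul, ← sub_mul, ← Int.cast_natCast, ← Int.cast_natCast a.toNat,
          ← Int.cast_sub, show ((-a).toNat : ℤ) - a.toNat = -a by omega, Int.cast_neg]

section Operators

variable {n : ℕ}

def mulOp (g : K) : V n → V n := fun v i => g * v i

def DegLE (v : V n) (b : ℤ) : Prop := ∀ j, (v j).support ⊆ Set.Iic b

/-- Bounded degree raising is what makes `cLie` bilinear: outside the window `-N ≤ m < 0` its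
summands vanish, whereas a `finsum` with infinite support is `0`. -/
def RaisesDegBy (T : V n → V n) (N : ℤ) : Prop := ∀ v b, DegLE v b → DegLE (T v) (N + b)

theorem RaisesDegBy.map_zero {T : V n → V n} {N : ℤ} (hT : RaisesDegBy T N) : T 0 = 0 := by
  funext j
  ext k
  by_contra hk
  have : k ≤ N + (k - N - 1) := hT 0 (k - N - 1) (fun _ => by simp) j hk
  omega

theorem RaisesDegBy.add_smul {S M : V n → V n} {N : ℤ} (hS : RaisesDegBy S N)
    (hM : RaisesDegBy M N) (c : ℂ) : RaisesDegBy (fun w => S w + c • M w) N :=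
  fun v b hv j => (HahnSeries.support_add_subset _ _).trans
    (Set.union_subset (hS v b hv j) ((HahnSeries.support_smul_subset c _).trans (hM v b hv j)))

theorem raisesDegBy_mulOp {g : K} {N : ℤ} (hg : g.support ⊆ Set.Iic N) :
    RaisesDegBy (mulOp (n := n) g) N :=
  fun _ _ hv j => support_mul_subset_Iic hg (hv j)

theorem raisesDegBy_Dop (β : ℤ) {D : Matrix (Fin n) (Fin n) Rl × Rl} {N : ℤ}
    (hA : ∀ i j, (toK (D.1 i j)).support ⊆ Set.Iic N) (hh : (toK D.2).support ⊆ Set.Iic N) :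
    RaisesDegBy (Dop n β D) N := by
  intro v b hv i
  have hsum : (∑ j, toK (D.1 i j) * v j).support ⊆ Set.Iic (N + b) :=
    support_sum_subset_Iic _ fun j _ => support_mul_subset_Iic (hA i j) (hv j)
  have hder : (toK D.2 * fd (v i)).support ⊆ Set.Iic (N + b) :=
    support_mul_subset_Iic hh (support_fd_subset_Iic (hv i))
  have hmul : (β • (fd (toK D.2) * v i)).support ⊆ Set.Iic (N + b) :=
    (HahnSeries.support_smul_subset _ _).trans
      (support_mul_subset_Iic (support_fd_subset_Iic hh) (hv i))
  exact (HahnSeries.support_add_subset _ _).trans (Set.union_subset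
    ((HahnSeries.support_add_subset _ _).trans (Set.union_subset hsum hder)) hmul)

theorem exists_raisesDegBy_Dop_mulOp (D : Matrix (Fin n) (Fin n) Rl × Rl) :
    ∃ N, RaisesDegBy (Dop n 0 D) N ∧ RaisesDegBy (mulOp (n := n) (fd (toK D.2))) N := by
  have hfin : ((⋃ i, ⋃ j, (toK (D.1 i j)).support) ∪ (toK D.2).support).Finite :=
    (Set.finite_iUnion fun i => Set.finite_iUnion fun j => finite_support_toK _).union
      (finite_support_toK _)
  obtain ⟨N, hN⟩ := hfin.bddAbove
  have hh : (toK D.2).support ⊆ Set.Iic N := Set.subset_union_right.trans hN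
  refine ⟨N, raisesDegBy_Dop 0 (fun i j => ?_) hh, raisesDegBy_mulOp (support_fd_subset_Iic hh)⟩
  exact (Set.subset_iUnion₂ (s := fun i j => (toK (D.1 i j)).support) i j).trans
    (Set.subset_union_left.trans hN)

theorem isLinearMap_projM : IsLinearMap ℂ (projM (n := n)) where
  map_add v w := by
    funext i; ext k
    simp only [projM, Pi.add_apply, HahnSeries.coeff_add, coeff_tneg]
    split_ifs <;> simp
  map_smul c v := by
    funext i; ext k
    simp only [projM, Pi.smul_apply, HahnSeries.coeff_smul, coeff_tneg]
    split_ifs <;> simp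

theorem isLinearMap_projP : IsLinearMap ℂ (projP (n := n)) where
  map_add v w := by
    funext i; ext k
    simp only [projP, Pi.add_apply, HahnSeries.coeff_add, coeff_tpos]
    split_ifs <;> simp
  map_smul c v := by
    funext i; ext k
    simp only [projP, Pi.smul_apply, HahnSeries.coeff_smul, coeff_tpos]
    split_ifs <;> simp

theorem isLinearMap_mulOp (g : K) : IsLinearMap ℂ (mulOp (n := n) g) where
  map_add v w := funext fun i => mul_add g (v i) (w i)
  map_smul c v := funext fun i => mul_smul_comm c g (v i)

theorem isLinearMap_Dop (β : ℤ) (D : Matrix (Fin n) (Fin n) Rl × Rl) :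
    IsLinearMap ℂ (Dop n β D) where
  map_add v w := by
    funext i
    simp only [Dop, Pi.add_apply, mul_add, fd_add, Finset.sum_add_distrib, smul_add]
    abel
  map_smul c v := by
    funext i
    simp only [Dop, Pi.smul_apply, fd_smul, mul_smul_comm, Finset.smul_sum, smul_add,
      smul_comm β c]

theorem IsLinearMap.add_smul {S M : V n → V n} (hS : IsLinearMap ℂ S) (hM : IsLinearMap ℂ M)
    (c : ℂ) : IsLinearMap ℂ (fun w => S w + c • M w) :=
  ((hS.mk' S) + c • (hM.mk' M)).isLinear

theorem Dop_eq_add_smul_mulOp (β : ℤ) (D : Matrix (Fin n) (Fin n) Rl × Rl) :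
    Dop n β D = fun w => Dop n 0 D w + (β : ℂ) • mulOp (fd (toK D.2)) w := by
  funext v i
  simp only [Dop, mulOp, Pi.add_apply, Pi.smul_apply, zero_zsmul, add_zero]
  exact congrArg _ (Int.cast_smul_eq_zsmul ℂ β _).symm

end Operators

section Trace

variable {n : ℕ}

theorem commPM_swap (T₁ T₂ : V n → V n) (v : V n) : commPM T₂ T₁ v = -commPM T₁ T₂ v :=
  (neg_sub _ _).symm

theorem commPM_add_smul_left {T : V n → V n} (hT : IsLinearMap ℂ T) (S M : V n → V n) (c : ℂ)
    (v : V n) : commPM (fun w => S w + c • M w) T v = commPM S T v + c • commPM M T v := by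
  simp only [commPM, isLinearMap_projM.map_add, isLinearMap_projM.map_smul,
    isLinearMap_projP.map_add, isLinearMap_projP.map_smul, hT.map_add, hT.map_smul]
  module

theorem commPM_add_smul {S₁ M₁ S₂ M₂ : V n → V n} (hS₁ : IsLinearMap ℂ S₁)
    (hM₁ : IsLinearMap ℂ M₁) (hS₂ : IsLinearMap ℂ S₂) (hM₂ : IsLinearMap ℂ M₂) (c : ℂ)
    (v : V n) :
    commPM (fun w => S₁ w + c • M₁ w) (fun w => S₂ w + c • M₂ w) v =
      commPM S₁ S₂ v + c • (commPM S₁ M₂ v + commPM M₁ S₂ v) + c ^ 2 • commPM M₁ M₂ v := by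
  rw [commPM_add_smul_left (hS₂.add_smul hM₂ c), commPM_swap _ S₁, commPM_swap _ M₁,
    commPM_add_smul_left hS₁, commPM_add_smul_left hM₁, commPM_swap S₁ S₂, commPM_swap S₁ M₂,
    commPM_swap M₁ S₂, commPM_swap M₁ M₂]
  module

theorem degLE_bas (m : ℤ) (i : Fin n) : DegLE (bas n m i) m := by
  intro j k hk
  by_cases hj : j = i <;> simp_all [bas]

theorem DegLE.projM {v : V n} {b : ℤ} (hv : DegLE v b) : DegLE (projM v) b := by
  intro j k hk
  refine hv j ?_
  rw [HahnSeries.mem_support, _root_.projM, coeff_tneg] at hk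
  split_ifs at hk
  exacts [hk, absurd rfl hk]

theorem projP_eq_zero_of_degLE {v : V n} {b : ℤ} (hv : DegLE v b) (hb : b < 0) :
    projP v = 0 := by
  funext j; ext k
  simp only [projP, Pi.zero_apply, HahnSeries.coeff_zero, coeff_tpos]
  split_ifs with hk
  · by_contra h
    have : k ≤ b := hv j h
    omega
  · rfl

theorem commPM_bas_eq_zero {T₁ T₂ : V n → V n} {N₁ N₂ : ℤ} (h₁ : RaisesDegBy T₁ N₁)
    (h₂ : RaisesDegBy T₂ N₂) {m : ℤ} (hm : m < -max N₁ N₂) (i : Fin n) :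
    commPM T₁ T₂ (bas n m i) = 0 := by
  have hbas := (degLE_bas m i).projM
  rw [commPM, projP_eq_zero_of_degLE (h₂ _ _ hbas) (by omega),
    projP_eq_zero_of_degLE (h₁ _ _ hbas) (by omega), h₁.map_zero, h₂.map_zero, sub_self]

theorem cLie_eq_sum_Ico {T₁ T₂ : V n → V n} {N₁ N₂ : ℤ} (h₁ : RaisesDegBy T₁ N₁)
    (h₂ : RaisesDegBy T₂ N₂) :
    cLie n T₁ T₂ =
      ∑ m ∈ Finset.Ico (-max N₁ N₂) 0, ∑ i, (commPM T₁ T₂ (bas n m i) i).coeff m := by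
  simp only [cLie, finsum_eq_if, finsum_eq_sum_of_fintype]
  rw [finsum_eq_sum_of_support_subset _ fun m hm => ?_]
  · exact Finset.sum_congr rfl fun m hm => if_pos (Finset.mem_Ico.mp hm).2
  · rw [Function.mem_support, ne_eq, ite_eq_right_iff, not_forall] at hm
    obtain ⟨hm0, hm⟩ := hm
    rw [Finset.coe_Ico, Set.mem_Ico]
    refine ⟨not_lt.mp fun hlt => hm ?_, hm0⟩
    simp [commPM_bas_eq_zero h₁ h₂ hlt]

theorem cLie_add_smul {S₁ M₁ S₂ M₂ : V n → V n} {N₁ N₂ : ℤ}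
    (hS₁ : IsLinearMap ℂ S₁) (hM₁ : IsLinearMap ℂ M₁) (hS₂ : IsLinearMap ℂ S₂)
    (hM₂ : IsLinearMap ℂ M₂) (rS₁ : RaisesDegBy S₁ N₁) (rM₁ : RaisesDegBy M₁ N₁)
    (rS₂ : RaisesDegBy S₂ N₂) (rM₂ : RaisesDegBy M₂ N₂) (c : ℂ) :
    cLie n (fun w => S₁ w + c • M₁ w) (fun w => S₂ w + c • M₂ w) =
      cLie n S₁ S₂ + c * (cLie n S₁ M₂ + cLie n M₁ S₂) + c ^ 2 * cLie n M₁ M₂ := by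
  simp only [cLie_eq_sum_Ico (rS₁.add_smul rM₁ c) (rS₂.add_smul rM₂ c), cLie_eq_sum_Ico rS₁ rS₂,
    cLie_eq_sum_Ico rS₁ rM₂, cLie_eq_sum_Ico rM₁ rS₂, cLie_eq_sum_Ico rM₁ rM₂,
    commPM_add_smul hS₁ hM₁ hS₂ hM₂, Pi.add_apply, Pi.smul_apply, HahnSeries.coeff_add,
    HahnSeries.coeff_smul, smul_eq_mul, mul_add, Finset.sum_add_distrib, Finset.mul_sum]

theorem coeff_commPM_mulOp_bas (g h : K) {m : ℤ} (hm : m < 0) (i : Fin n) :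
    (commPM (mulOp g) (mulOp h) (bas n m i) i).coeff m =
      (g * tpos (h * HahnSeries.single m 1)).coeff m -
        (h * tpos (g * HahnSeries.single m 1)).coeff m := by
  have hbas : projM (bas n m i) i = HahnSeries.single m 1 := by
    ext k
    simp only [projM, bas, if_pos, coeff_tneg, HahnSeries.coeff_single]
    split_ifs <;> first | omega | rfl
  change (tneg (g * tpos (h * projM (bas n m i) i)) -
    tneg (h * tpos (g * projM (bas n m i) i))).coeff m = _
  rw [hbas, HahnSeries.coeff_sub, coeff_tneg, coeff_tneg, if_pos hm, if_pos hm]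

theorem cLie_mulOp {g h : K} (hg : g.support.Finite) (hh : h.support.Finite) :
    cLie n (mulOp g) (mulOp h) = n * Res (g * fd h) := by
  obtain ⟨N, hN⟩ := (hg.union hh).exists_subset_Ioo_neg
  rw [← Finset.coe_Ioo] at hN
  have hgN := Set.subset_union_left.trans hN
  have hhN := Set.subset_union_right.trans hN
  have raises : ∀ {f : K}, f.support ⊆ ↑(Finset.Ioo (-N) N) → RaisesDegBy (mulOp (n := n) f) N :=
    fun hf => raisesDegBy_mulOp <| hf.trans <| by
      rw [Finset.coe_Ioo]; exact Set.Ioo_subset_Iio_self.trans Set.Iio_subset_Iic_self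
  rw [cLie_eq_sum_Ico (raises hgN) (raises hhN), max_self, Res_mul_fd_eq_sum hgN,
    ← sum_Ico_sum_Ioo_ite_le, Finset.mul_sum]
  refine Finset.sum_congr rfl fun m hm => ?_
  simp only [coeff_commPM_mulOp_bas g h (Finset.mem_Ico.mp hm).2, coeff_mul_tpos_mul_single hgN,
    coeff_mul_tpos_mul_single hhN, Finset.sum_const, Finset.card_univ, Fintype.card_fin,
    nsmul_eq_mul, ← Finset.sum_sub_distrib, ite_sub_ite, sub_self, neg_neg, mul_comm (h.coeff _)]

end Trace

theorem cocycle_combination_identity_general (n : ℕ) (β : ℤ)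
    (D₁ D₂ : Matrix (Fin n) (Fin n) Rl × Rl) :
    cLie n (Dop n β D₁) (Dop n β D₂) =
      (β : ℂ) * cLie n (Dop n 1 D₁) (Dop n 1 D₂)
        + (1 - (β : ℂ)) * cLie n (Dop n 0 D₁) (Dop n 0 D₂)
        + 6 * (n : ℂ) * (β : ℂ) * ((β : ℂ) - 1) * vir1 D₁ D₂ := by
  obtain ⟨N₁, rS₁, rM₁⟩ := exists_raisesDegBy_Dop_mulOp (n := n) D₁
  obtain ⟨N₂, rS₂, rM₂⟩ := exists_raisesDegBy_Dop_mulOp (n := n) D₂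
  set M₁ := mulOp (n := n) (fd (toK D₁.2))
  set M₂ := mulOp (n := n) (fd (toK D₂.2))
  have expand : ∀ γ : ℤ, cLie n (Dop n γ D₁) (Dop n γ D₂) =
      cLie n (Dop n 0 D₁) (Dop n 0 D₂)
        + γ * (cLie n (Dop n 0 D₁) M₂ + cLie n M₁ (Dop n 0 D₂)) + γ ^ 2 * cLie n M₁ M₂ :=
    fun γ => by
      rw [Dop_eq_add_smul_mulOp γ D₁, Dop_eq_add_smul_mulOp γ D₂]
      exact cLie_add_smul (isLinearMap_Dop 0 D₁) (isLinearMap_mulOp _) (isLinearMap_Dop 0 D₂)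
        (isLinearMap_mulOp _) rS₁ rM₁ rS₂ rM₂ γ
  rw [expand β, expand 1, cLie_mulOp (finite_support_fd (finite_support_toK _))
    (finite_support_fd (finite_support_toK _)), vir1_eq_Res]
  push_cast
  ring

/-- The identity `c_{n,β} = β·c_{n,1} + (1−β)·c_{n,0} + 6nβ(β−1)·vir₁` among the cocycles
of the central extensions of the Lie algebra of first-order scalar differential
operators, where `c_{n,β}(D₁, D₂) = c_Lie(D₁^{(β)}, D₂^{(β)})`. -/
theorem cocycle_combination_identity (n : ℕ) (hn : 1 ≤ n) (β : ℤ)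
    (D₁ D₂ : Matrix (Fin n) (Fin n) Rl × Rl) :
    cLie n (Dop n β D₁) (Dop n β D₂) =
      (β : ℂ) * cLie n (Dop n 1 D₁) (Dop n 1 D₂)
        + (1 - (β : ℂ)) * cLie n (Dop n 0 D₁) (Dop n 0 D₂)
        + 6 * (n : ℂ) * (β : ℂ) * ((β : ℂ) - 1) * vir1 D₁ D₂ :=
  cocycle_combination_identity_general n β D₁ D₂

end
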